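/- arXiv:2508.12420 — 2 statements merged into one kernel-verified Lean document; each statement's English description precedes it below -/
import Mathlib

section
/- Let K be a field and let P∞ := K⸨X⸩ / (X·K⟦X⟧) be the quotient of the K⟦X⟧-module of formal Laurent series by the submodule of power series with zero constant term. Then for every nonzero power series f ∈ K⟦X⟧, the scalar multiplication map f • (−) : P∞ → P∞ is surjective, and its kernel is a K-vector subspace of P∞ of finite dimension equal to the order of f (the least n such that the n-th coefficient of f is nonzero). -/
/-!
Since `f ≠ 0` is invertible in `K⸨X⸩`, multiplication by `f` is already surjective on `K⸨X⸩`,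
hence on its quotient `P∞`. For the kernel write `f = X ^ d * u` with `d = ord f` and `u` a unit
of `K⟦X⟧`: then `f` and `X ^ d` kill the same elements of `P∞`, and `X ^ d • [y] = 0` says
exactly that all coefficients of `y` in degrees `≤ -d` vanish. So the kernel is spanned, freely,
by the classes of `1, X⁻¹, …, X^{-(d-1)}`.
-/

open PowerSeries

variable {K : Type*}

instance laurentSeriesTower [Field K] : IsScalarTower K (PowerSeries K) (LaurentSeries K) :=
  ⟨fun c f x => by
    show (HahnSeries.ofPowerSeries ℤ K) (c • f) * x = c • ((HahnSeries.ofPowerSeries ℤ K) f * x)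
    rw [← HahnSeries.C_mul_eq_smul, PowerSeries.smul_eq_C_mul, map_mul,
      HahnSeries.ofPowerSeries_C, mul_assoc]⟩

/-- `P∞ = K⸨X⸩ / (X·K⟦X⟧)`: the quotient of the `K⟦X⟧`-module of formal Laurent series
by the submodule `X·K⟦X⟧` of power series with zero constant term, i.e. by the
`K⟦X⟧`-submodule generated by (the image in `K⸨X⸩` of) `X`. -/
noncomputable abbrev LaurentQuot (K : Type*) [Field K] :=
  LaurentSeries K ⧸
    Submodule.span (PowerSeries K)
      {(algebraMap (PowerSeries K) (LaurentSeries K)) (PowerSeries.X : PowerSeries K)}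

theorem Submodule.Quotient.surjective_smul {R M : Type*} [Ring R] [AddCommGroup M] [Module R M]
    (N : Submodule R M) {r : R} (h : Function.Surjective fun m : M => r • m) :
    Function.Surjective fun q : M ⧸ N => r • q := by
  intro q
  obtain ⟨y, rfl⟩ := Submodule.Quotient.mk_surjective N q
  obtain ⟨x, rfl⟩ := h y
  exact ⟨Submodule.Quotient.mk x, (Submodule.Quotient.mk_smul N r x).symm⟩

theorem PowerSeries.smul_eq_zero_iff_X_pow_order_smul_eq_zero [Field K] {M : Type*}
    [AddCommGroup M] [Module (PowerSeries K) M] {f : PowerSeries K} (hf : f ≠ 0) {m : M} :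
    f • m = 0 ↔ (X ^ f.order.toNat : PowerSeries K) • m = 0 := by
  conv_lhs => rw [← X_pow_order_mul_divXPowOrder (f := f), mul_comm, mul_smul]
  exact (isUnit_divided_by_X_pow_order hf).smul_eq_zero

namespace LaurentSeries

section Semiring

variable {R : Type*} [Semiring R]

theorem coeff_coe_of_neg (g : PowerSeries R) {n : ℤ} (hn : n < 0) :
    (g : LaurentSeries R).coeff n = 0 := by
  rw [PowerSeries.coeff_coe, if_pos hn]

noncomputable def ofNonposCoeffs (d : ℕ) : (Fin d → R) →ₗ[R] LaurentSeries R :=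
  ∑ j : Fin d, (HahnSeries.single.linearMap (-(j : ℤ))).comp (LinearMap.proj j)

theorem coeff_ofNonposCoeffs {d : ℕ} (c : Fin d → R) (n : ℤ) :
    (ofNonposCoeffs d c).coeff n = ∑ j : Fin d, (HahnSeries.single (-(j : ℤ)) (c j)).coeff n := by
  simp only [ofNonposCoeffs, LinearMap.sum_apply, HahnSeries.coeff_sum]
  rfl

theorem coeff_ofNonposCoeffs_neg {d : ℕ} (c : Fin d → R) (i : Fin d) :
    (ofNonposCoeffs d c).coeff (-(i : ℤ)) = c i := by
  rw [coeff_ofNonposCoeffs, Finset.sum_eq_single i (fun j _ hji => ?_) (by simp),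
    HahnSeries.coeff_single_same]
  exact HahnSeries.coeff_single_of_ne (by omega)

theorem coeff_ofNonposCoeffs_of_le {d : ℕ} (c : Fin d → R) {n : ℤ} (hn : n ≤ -(d : ℤ)) :
    (ofNonposCoeffs d c).coeff n = 0 := by
  rw [coeff_ofNonposCoeffs]
  exact Finset.sum_eq_zero fun j _ => HahnSeries.coeff_single_of_ne (by omega)

end Semiring

section CommRing

variable {R : Type*} [CommRing R]

theorem X_pow_smul_eq_single_mul (d : ℕ) (y : LaurentSeries R) :
    (X ^ d : PowerSeries R) • y = HahnSeries.single (d : ℤ) 1 * y := by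
  rw [Algebra.smul_def, coe_algebraMap, HahnSeries.ofPowerSeries_X_pow]

theorem mem_span_X_iff {z : LaurentSeries R} :
    z ∈ Submodule.span (PowerSeries R) {algebraMap (PowerSeries R) (LaurentSeries R) X} ↔
      ∀ n ≤ 0, z.coeff n = 0 := by
  simp only [Submodule.mem_span_singleton, Algebra.smul_def, coe_algebraMap,
    HahnSeries.ofPowerSeries_X]
  constructor
  · rintro ⟨g, rfl⟩ n hn
    rw [HahnSeries.coeff_mul_single, coeff_coe_of_neg g (by omega), zero_mul]
  · intro h
    refine ⟨PowerSeries.mk fun k => z.coeff (k + 1), ?_⟩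
    ext n
    rw [HahnSeries.coeff_mul_single, mul_one]
    rcases lt_or_ge (n - 1) 0 with hn | hn
    · rw [coeff_coe_of_neg _ hn, h n (by omega)]
    · lift n - 1 to ℕ using hn with k hk
      rw [coeff_coe_powerSeries, PowerSeries.coeff_mk]
      congr 1
      omega

theorem X_pow_smul_mem_span_X_iff {d : ℕ} {y : LaurentSeries R} :
    (X ^ d : PowerSeries R) • y ∈
        Submodule.span (PowerSeries R) {algebraMap (PowerSeries R) (LaurentSeries R) X} ↔
      ∀ n ≤ -(d : ℤ), y.coeff n = 0 := by
  simp only [X_pow_smul_eq_single_mul, mem_span_X_iff, HahnSeries.coeff_single_mul, one_mul]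
  constructor
  · intro h n hn
    simpa using h (n + (d : ℤ)) (by omega)
  · intro h n hn
    exact h _ (by omega)

end CommRing

theorem surjective_powerSeries_smul [Field K] {f : PowerSeries K} (hf : f ≠ 0) :
    Function.Surjective fun y : LaurentSeries K => f • y := by
  have hf' : (f : LaurentSeries K) ≠ 0 :=
    (map_ne_zero_iff _ HahnSeries.ofPowerSeries_injective).mpr hf
  intro y
  exact ⟨(f : LaurentSeries K)⁻¹ * y, by simp [Algebra.smul_def, hf']⟩

end LaurentSeries

namespace LaurentQuot

variable [Field K]

noncomputable def ofCoeffs (d : ℕ) : (Fin d → K) →ₗ[K] LaurentQuot K :=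
  ((Submodule.mkQ _).restrictScalars K).comp (LaurentSeries.ofNonposCoeffs d)

theorem ofCoeffs_injective (d : ℕ) : Function.Injective (ofCoeffs (K := K) d) := by
  rw [← LinearMap.ker_eq_bot, LinearMap.ker_eq_bot']
  intro c hc
  have hmem := (Submodule.Quotient.mk_eq_zero _).mp hc
  funext i
  rw [← LaurentSeries.coeff_ofNonposCoeffs_neg c i]
  exact LaurentSeries.mem_span_X_iff.mp hmem _ (by omega)

theorem ker_X_pow_smul (d : ℕ) :
    LinearMap.ker (DistribSMul.toLinearMap K (LaurentQuot K) (X ^ d : PowerSeries K)) =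
      LinearMap.range (ofCoeffs d) := by
  ext p
  obtain ⟨y, rfl⟩ := Submodule.Quotient.mk_surjective _ p
  rw [LinearMap.mem_ker, DistribSMul.toLinearMap_apply, ← Submodule.Quotient.mk_smul,
    Submodule.Quotient.mk_eq_zero, LaurentSeries.X_pow_smul_mem_span_X_iff]
  simp only [LinearMap.mem_range, ofCoeffs, LinearMap.comp_apply, LinearMap.restrictScalars_apply,
    Submodule.mkQ_apply, Submodule.Quotient.eq, LaurentSeries.mem_span_X_iff, HahnSeries.coeff_sub]
  constructor
  · intro hy
    refine ⟨fun j => y.coeff (-(j : ℤ)), fun n hn => ?_⟩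
    rcases le_or_gt n (-(d : ℤ)) with hnd | hnd
    · rw [LaurentSeries.coeff_ofNonposCoeffs_of_le _ hnd, hy n hnd, sub_zero]
    · obtain ⟨j, rfl⟩ : ∃ j : Fin d, n = -(j : ℤ) := ⟨⟨(-n).toNat, by omega⟩, by simp; omega⟩
      rw [LaurentSeries.coeff_ofNonposCoeffs_neg, sub_self]
  · rintro ⟨c, hc⟩ n hn
    simpa [LaurentSeries.coeff_ofNonposCoeffs_of_le _ hn] using hc n (by omega)

theorem ker_smul_eq_range_ofCoeffs {f : PowerSeries K} (hf : f ≠ 0) :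
    LinearMap.ker (DistribSMul.toLinearMap K (LaurentQuot K) f) =
      LinearMap.range (ofCoeffs f.order.toNat) := by
  rw [← ker_X_pow_smul]
  ext p
  exact PowerSeries.smul_eq_zero_iff_X_pow_order_smul_eq_zero hf

end LaurentQuot

/-- For every nonzero power series `f ∈ K⟦X⟧`, scalar multiplication by `f`
on `P∞ = K⸨X⸩/(X·K⟦X⟧)` is surjective, and its kernel is a `K`-subspace of `P∞` of finite
dimension equal to the order of `f`. -/
theorem surjective_and_finrank_ker_smul_laurentQuot
    [Field K] (f : PowerSeries K) (hf : f ≠ 0) :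
    Function.Surjective (fun p : LaurentQuot K => f • p) ∧
    ∃ W : Submodule K (LaurentQuot K),
      (W : Set (LaurentQuot K)) = {p : LaurentQuot K | f • p = 0} ∧
      FiniteDimensional K W ∧
      (Module.finrank K W : ℕ∞) = f.order := by
  refine ⟨Submodule.Quotient.surjective_smul _ (LaurentSeries.surjective_powerSeries_smul hf),
    LinearMap.ker (DistribSMul.toLinearMap K (LaurentQuot K) f), rfl, ?_⟩
  rw [LaurentQuot.ker_smul_eq_range_ofCoeffs hf]
  refine ⟨inferInstance, ?_⟩
  rw [LinearMap.finrank_range_of_inj (LaurentQuot.ofCoeffs_injective _), Module.finrank_fin_fun,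
    ENat.natCast_toNat (PowerSeries.order_eq_top.not.mpr hf)]
end

section
/- Let K be a field, d a natural number, and let P∞ := K⸨X⸩ / (X·K⟦X⟧) be the quotient of the K⟦X⟧-module of formal Laurent series by the submodule of power series with zero constant term. Let A be a d × d matrix with entries in K⟦X⟧ such that det A ≠ 0. Then the K⟦X⟧-linear map (Fin d → P∞) → (Fin d → P∞) given by v ↦ A · v (matrix–vector multiplication using the scalar action of K⟦X⟧ on P∞) is surjective, and its kernel is a K-vector space of finite dimension equal to the order of det A. -/
open PowerSeries

variable {K : Type*}

/-!
Since `A * adjugate A = det A • 1`, the matrix `A` acts surjectively on `P∞ᵈ` once `det A`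
acts surjectively on `P∞`, and a nonzero power series does, being invertible in `K⸨X⸩`.

For the kernel, induct on `ord (det A)`. If `det A` has zero constant term, a nonzero kernel
vector of `A mod X` gives an invertible constant column operation `Q` making one column of `A * Q`
divisible by `X`, so `A * Q = B * diag(1, …, X, …, 1)` with `ord (det B) = ord (det A) - 1`.
Kernel dimensions add along a composite whose inner map is surjective, and the kernel of `X` on
`P∞` is the line spanned by the class of `1`.
-/

open Function
open scoped LaurentSeries

universe u

theorem LinearMap.rank_ker_comp_of_surjective {R U : Type*} {V W : Type u} [Ring R]
    [HasRankNullity.{u} R] [AddCommGroup V] [AddCommGroup W] [AddCommGroup U] [Module R V]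
    [Module R W] [Module R U] (f : W →ₗ[R] U) {g : V →ₗ[R] W} (hg : Surjective g) :
    Module.rank R (ker (f ∘ₗ g)) = Module.rank R (ker f) + Module.rank R (ker g) := by
  let g' : ker (f ∘ₗ g) →ₗ[R] ker f := g.restrict fun _ hx => hx
  have hg' : Surjective g' := by
    rintro ⟨y, hy⟩
    obtain ⟨x, rfl⟩ := hg y
    exact ⟨⟨x, hy⟩, rfl⟩
  have hker : ker g' = (ker g).comap (ker (f ∘ₗ g)).subtype := by
    ext x
    simp only [mem_ker, Submodule.mem_comap, Submodule.subtype_apply, Subtype.ext_iff]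
    rfl
  rw [rank_eq_of_surjective hg', hker,
    (Submodule.comapSubtypeEquivOfLe (ker_le_ker_comp g f)).rank_eq]

namespace Matrix

section toPiEnd

universe v w

variable {R : Type*} {M : Type v} {n : Type w} [CommRing R] [AddCommGroup M] [Module R M]
  [Fintype n] [DecidableEq n]

variable (M) in
noncomputable def toPiEnd : Matrix n n R →+* Module.End R (n → M) :=
  (endVecRingEquivMatrixEnd n R M).symm.toRingHom.comp (algebraMap R (Module.End R M)).mapMatrix

theorem toPiEnd_apply (A : Matrix n n R) (v : n → M) (i : n) :
    toPiEnd M A v i = ∑ j, A i j • v j := rfl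

theorem toPiEnd_diagonal (w : n → R) (v : n → M) :
    toPiEnd M (diagonal w) v = fun i => w i • v i := by
  funext i
  simp [toPiEnd_apply, diagonal_apply, ite_smul]

theorem toPiEnd_surjective {A : Matrix n n R} (hA : Surjective fun m : M => A.det • m) :
    Surjective (toPiEnd M A) := by
  intro v
  choose w hw using fun i => hA (v i)
  refine ⟨toPiEnd M A.adjugate w, ?_⟩
  rw [← Module.End.mul_apply, ← map_mul, mul_adjugate, smul_one_eq_diagonal, toPiEnd_diagonal]
  exact funext hw

theorem toPiEnd_bijective {A : Matrix n n R} (hA : IsUnit A.det) : Bijective (toPiEnd M A) :=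
  (Module.End.isUnit_iff _).mp (((isUnit_iff_isUnit_det A).mpr hA).map (toPiEnd M))

variable [Field K] [Algebra K R] [Module K M] [IsScalarTower K R M]

theorem ker_toPiEnd_eq_bot {A : Matrix n n R} (hA : IsUnit A.det) :
    LinearMap.ker ((toPiEnd M A).restrictScalars K) = ⊥ :=
  LinearMap.ker_eq_bot.mpr (toPiEnd_bijective (M := M) hA).injective

theorem ker_toPiEnd_diagonal_update_one (j : n) (r : R) :
    LinearMap.ker ((toPiEnd M (diagonal (update 1 j r))).restrictScalars K) =
      (LinearMap.ker (DistribSMul.toLinearMap K M r)).map (LinearMap.single K (fun _ => M) j) := by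
  ext v
  simp only [LinearMap.mem_ker, LinearMap.restrictScalars_apply, toPiEnd_diagonal,
    Submodule.mem_map, DistribSMul.toLinearMap_apply, LinearMap.coe_single]
  constructor
  · intro hv
    refine ⟨v j, by simpa using congrFun hv j, funext fun i => ?_⟩
    by_cases hi : i = j
    · subst hi; simp
    · simpa [hi] using (congrFun hv i).symm
  · rintro ⟨m, hm, rfl⟩
    funext i
    by_cases hi : i = j
    · subst hi; simpa using hm
    · simp [hi]

theorem rank_ker_toPiEnd_diagonal_update_one (j : n) (r : R) :
    Module.rank K (LinearMap.ker ((toPiEnd M (diagonal (update 1 j r))).restrictScalars K)) =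
      Cardinal.lift.{w} (Module.rank K (LinearMap.ker (DistribSMul.toLinearMap K M r))) := by
  rw [ker_toPiEnd_diagonal_update_one]
  have h := (Submodule.equivMapOfInjective (LinearMap.single K (fun _ => M) j)
    (Pi.single_injective (M := fun _ => M) j)
    (LinearMap.ker (DistribSMul.toLinearMap K M r))).lift_rank_eq
  rwa [Cardinal.lift_umax, Cardinal.lift_id'.{v, w}, eq_comm] at h

theorem rank_ker_toPiEnd_mul (A : Matrix n n R) {B : Matrix n n R}
    (hB : Surjective (toPiEnd M B)) :
    Module.rank K (LinearMap.ker ((toPiEnd M (A * B)).restrictScalars K)) =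
      Module.rank K (LinearMap.ker ((toPiEnd M A).restrictScalars K)) +
        Module.rank K (LinearMap.ker ((toPiEnd M B).restrictScalars K)) := by
  rw [map_mul]
  exact LinearMap.rank_ker_comp_of_surjective ((toPiEnd M A).restrictScalars K)
    (g := (toPiEnd M B).restrictScalars K) hB

end toPiEnd

theorem det_one_updateCol {R n : Type*} [CommRing R] [Fintype n] [DecidableEq n] (j : n)
    (c : n → R) : (updateCol 1 j c).det = c j := by
  rw [← cramer_apply, cramer_one]; rfl

theorem exists_eq_mul_diagonal_update_one_of_dvd {R n : Type*} [CommSemiring R] [Fintype n]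
    [DecidableEq n] {C : Matrix n n R} {j : n} {r : R} (h : ∀ i, r ∣ C i j) :
    ∃ B, C = B * diagonal (update 1 j r) := by
  choose t ht using h
  refine ⟨C.updateCol j t, ext fun i k => ?_⟩
  rw [mul_diagonal]
  by_cases hk : k = j
  · subst hk; simp [ht, mul_comm]
  · simp [hk]

section PowerSeries

variable {M n : Type*} [Field K] [Fintype n] [DecidableEq n]

theorem exists_mul_eq_mul_diagonal_X {A : Matrix n n K⟦X⟧} (hA : constantCoeff A.det = 0) :
    ∃ (Q B : Matrix n n K⟦X⟧) (j : n),
      IsUnit Q.det ∧ A * Q = B * diagonal (update 1 j X) := by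
  have hA₀ : (A.map constantCoeff).det = 0 := by
    rw [← RingHom.mapMatrix_apply, ← RingHom.map_det, hA]
  obtain ⟨c, hc, hAc⟩ := exists_mulVec_eq_zero_iff.mpr hA₀
  obtain ⟨j, hj⟩ := ne_iff.mp hc
  set Q : Matrix n n K⟦X⟧ := updateCol 1 j (C ∘ c)
  have hQ : IsUnit Q.det := by
    rw [det_one_updateCol]
    exact (Ne.isUnit hj).map C
  have hdvd : ∀ i, X ∣ (A * Q) i j := fun i => by
    rw [X_dvd_iff, mul_updateCol, updateCol_self, RingHom.map_mulVec]
    simpa [comp_def] using congrFun hAc i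
  obtain ⟨B, hB⟩ := exists_eq_mul_diagonal_update_one_of_dvd hdvd
  exact ⟨Q, B, j, hQ, hB⟩

variable [AddCommGroup M] [Module K⟦X⟧ M] [Module K M] [IsScalarTower K K⟦X⟧ M]

theorem rank_ker_toPiEnd_eq_order (hX : Surjective fun m : M => (X : K⟦X⟧) • m)
    (hXker : Module.rank K (LinearMap.ker (DistribSMul.toLinearMap K M (X : K⟦X⟧))) = 1)
    (N : ℕ) (A : Matrix n n K⟦X⟧) (hA : A.det.order = N) :
    Module.rank K (LinearMap.ker ((toPiEnd M A).restrictScalars K)) = N := by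
  induction N generalizing A with
  | zero =>
    have hunit : IsUnit A.det := isUnit_iff_constantCoeff.mpr <| Ne.isUnit fun h =>
      order_ne_zero_iff_constCoeff_eq_zero.mpr h (by exact_mod_cast hA)
    rw [ker_toPiEnd_eq_bot hunit, rank_bot, Nat.cast_zero]
  | succ N ih =>
    have hA₀ : constantCoeff A.det = 0 :=
      order_ne_zero_iff_constCoeff_eq_zero.mp (by rw [hA]; exact_mod_cast N.succ_ne_zero)
    obtain ⟨Q, B, j, hQ, hAQ⟩ := exists_mul_eq_mul_diagonal_X hA₀
    have hdetD : (diagonal (update 1 j X) : Matrix n n K⟦X⟧).det = X := by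
      simp [det_diagonal, Finset.prod_update_of_mem]
    have hB : B.det.order = N := by
      have h := congrArg (fun A => (det A).order) hAQ
      simp only [det_mul, order_mul, hA, order_zero_of_unit hQ, hdetD, order_X, add_zero,
        Nat.cast_succ] at h
      exact (WithTop.add_right_cancel ENat.one_ne_top h).symm
    have hD : Surjective (toPiEnd M (diagonal (update 1 j (X : K⟦X⟧)))) :=
      toPiEnd_surjective (by rwa [hdetD])
    calc Module.rank K (LinearMap.ker ((toPiEnd M A).restrictScalars K))
        = Module.rank K (LinearMap.ker ((toPiEnd M (A * Q)).restrictScalars K)) := by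
          rw [rank_ker_toPiEnd_mul A (toPiEnd_bijective hQ).surjective, ker_toPiEnd_eq_bot hQ,
            rank_bot, add_zero]
      _ = Module.rank K (LinearMap.ker ((toPiEnd M B).restrictScalars K)) + 1 := by
          rw [hAQ, rank_ker_toPiEnd_mul B hD, rank_ker_toPiEnd_diagonal_update_one, hXker,
            Cardinal.lift_one]
      _ = (N + 1 : ℕ) := by rw [ih B hB, Nat.cast_succ]

end PowerSeries

end Matrix

namespace LaurentQuot

variable [Field K]

theorem smul_surjective {r : K⟦X⟧} (hr : r ≠ 0) :
    Surjective fun m : LaurentQuot K => r • m := by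
  intro m
  obtain ⟨z, rfl⟩ := Submodule.Quotient.mk_surjective _ m
  have hr' : algebraMap K⟦X⟧ K⸨X⸩ r ≠ 0 :=
    (map_ne_zero_iff _ (IsFractionRing.injective _ _)).mpr hr
  refine ⟨Submodule.Quotient.mk ((algebraMap K⟦X⟧ K⸨X⸩ r)⁻¹ * z), ?_⟩
  change r • _ = _
  rw [← Submodule.Quotient.mk_smul, Algebra.smul_def, ← mul_assoc, mul_inv_cancel₀ hr',
    one_mul]

theorem X_smul_mk_one : (X : K⟦X⟧) • (Submodule.Quotient.mk 1 : LaurentQuot K) = 0 := by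
  rw [← Submodule.Quotient.mk_smul, Submodule.Quotient.mk_eq_zero, Algebra.smul_def, mul_one]
  exact Submodule.mem_span_singleton_self _

theorem mk_algebraMap (r : K⟦X⟧) :
    (Submodule.Quotient.mk (algebraMap K⟦X⟧ K⸨X⸩ r) : LaurentQuot K) =
      constantCoeff r • Submodule.Quotient.mk 1 := by
  conv_lhs => rw [← mul_one (algebraMap _ _ r), ← Algebra.smul_def, Submodule.Quotient.mk_smul,
    eq_X_mul_shift_add_const r]
  rw [add_smul, mul_smul, smul_comm, X_smul_mk_one, smul_zero, zero_add,
    ← algebraMap_smul K⟦X⟧ (constantCoeff r)]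
  rfl

theorem mk_one_ne_zero : (Submodule.Quotient.mk 1 : LaurentQuot K) ≠ 0 := by
  rw [Ne, Submodule.Quotient.mk_eq_zero, Submodule.mem_span_singleton]
  rintro ⟨a, ha⟩
  rw [Algebra.smul_def, ← map_mul, ← map_one (algebraMap K⟦X⟧ K⸨X⸩)] at ha
  simpa using congrArg constantCoeff (IsFractionRing.injective _ _ ha)

theorem ker_X_smul :
    LinearMap.ker (DistribSMul.toLinearMap K (LaurentQuot K) (X : K⟦X⟧)) =
      K ∙ Submodule.Quotient.mk 1 := by
  refine le_antisymm (fun m hm => ?_) ?_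
  · obtain ⟨z, rfl⟩ := Submodule.Quotient.mk_surjective _ m
    rw [LinearMap.mem_ker, DistribSMul.toLinearMap_apply, ← Submodule.Quotient.mk_smul,
      Submodule.Quotient.mk_eq_zero, Submodule.mem_span_singleton] at hm
    obtain ⟨a, ha⟩ := hm
    have hX : algebraMap K⟦X⟧ K⸨X⸩ X ≠ 0 :=
      (map_ne_zero_iff _ (IsFractionRing.injective _ _)).mpr X_ne_zero
    have hz : z = algebraMap K⟦X⟧ K⸨X⸩ a := by
      rw [Algebra.smul_def, Algebra.smul_def, mul_comm] at ha
      exact (mul_left_cancel₀ hX ha).symm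
    rw [hz, mk_algebraMap]
    exact Submodule.smul_mem _ _ (Submodule.mem_span_singleton_self _)
  · rw [Submodule.span_le, Set.singleton_subset_iff]
    exact X_smul_mk_one

theorem rank_ker_X_smul :
    Module.rank K (LinearMap.ker (DistribSMul.toLinearMap K (LaurentQuot K) (X : K⟦X⟧))) =
      1 := by
  rw [ker_X_smul, ← Module.finrank_eq_rank, finrank_span_singleton mk_one_ne_zero, Nat.cast_one]

end LaurentQuot

/-- Let `A` be a `d × d` matrix with entries in `K⟦X⟧` with `det A ≠ 0`.
Then the `K⟦X⟧`-linear map `(Fin d → P∞) → (Fin d → P∞)`, `v ↦ A · v` (matrix–vector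
multiplication via the scalar action of `K⟦X⟧` on `P∞`) is surjective, and its kernel is
a `K`-vector space of finite dimension equal to the order of `det A`. -/
theorem surjective_and_finrank_ker_matrix_smul_laurentQuot
    [Field K] (d : ℕ) (A : Matrix (Fin d) (Fin d) (PowerSeries K)) (hA : A.det ≠ 0) :
    Function.Surjective
      (fun v : Fin d → LaurentQuot K => fun i => ∑ j, A i j • v j) ∧
    ∃ W : Submodule K (Fin d → LaurentQuot K),
      (W : Set (Fin d → LaurentQuot K)) =
        {v : Fin d → LaurentQuot K | ∀ i, ∑ j, A i j • v j = 0} ∧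
      FiniteDimensional K W ∧
      (Module.finrank K W : ℕ∞) = A.det.order := by
  obtain ⟨N, hN⟩ := ENat.ne_top_iff_exists.mp (order_eq_top.not.mpr hA)
  have hrank := Matrix.rank_ker_toPiEnd_eq_order (LaurentQuot.smul_surjective X_ne_zero)
    LaurentQuot.rank_ker_X_smul N A hN.symm
  refine ⟨Matrix.toPiEnd_surjective (LaurentQuot.smul_surjective hA),
    LinearMap.ker ((Matrix.toPiEnd _ A).restrictScalars K), ?_,
    FiniteDimensional.of_rank_eq_nat hrank, by rw [Module.finrank_eq_of_rank_eq hrank, hN]⟩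
  ext v
  simp [funext_iff, Matrix.toPiEnd_apply]
end
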